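/- arXiv:2507.17069 — 2 statements merged into one kernel-verified Lean document; each statement's English description precedes it below -/
import Mathlib

section
/- Let λ > 0 and Y ∈ ℝ^{m×n}. For any singular value decomposition Y = U Σ Vᵀ, the matrix D_λ(Y) = U S_λ(Σ) Vᵀ, obtained by applying soft thresholding with parameter λ to each diagonal entry of Σ, is the unique minimizer over X ∈ ℝ^{m×n} of λ‖X‖_* + (1/2)‖X − Y‖_F². -/
open Matrix

/-- The soft thresholding operator with parameter `lam`. -/
noncomputable def soft (lam a : ℝ) : ℝ :=
  if a > lam then a - lam else if a < -lam then a + lam else 0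

/-- The nuclear norm of a real matrix: the sum of its singular values,
i.e. of the square roots of the eigenvalues of `AᴴA`. -/
noncomputable def nuclearNorm {m n : ℕ} (A : Matrix (Fin m) (Fin n) ℝ) : ℝ :=
  ∑ i, Real.sqrt ((Matrix.isHermitian_conjTranspose_mul_self A).eigenvalues i)

/-- The squared Frobenius norm of a real matrix. -/
def frobSq {m n : ℕ} (A : Matrix (Fin m) (Fin n) ℝ) : ℝ :=
  ∑ i, ∑ j, (A i j)^2

/-!
Conjugation by orthogonal matrices preserves both norms, so after replacing `X` by `Uᵀ X V` we
may take `Y = Σ` rectangular diagonal. Writing `Z = W Qᵀ` with `Q` an orthonormal eigenbasis of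
`ZᵀZ`, the columns of `W` have norms `σₖ(Z)`, and Cauchy–Schwarz bounds the ℓ¹ norm of the
diagonal of `Z` by `‖Z‖_*`, with equality when `Z` is itself rectangular diagonal. The objective is
thus bounded below, entry by entry, by the scalar problems `λ|z| + (z - σ)²/2`, whose minimizer
`soft λ σ` beats every `z` by the margin `(z - soft λ σ)²/2`. Summing gives
`F(X) ≥ F(D) + ‖X - D‖_F²/2` for `F = svtObjective λ Y` and `D = D_λ(Y)`, hence both minimality
and uniqueness.
-/

lemma soft_zero {lam : ℝ} (hlam : 0 ≤ lam) : soft lam 0 = 0 := by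
  unfold soft; split_ifs <;> linarith

lemma soft_optimality {lam : ℝ} (hlam : 0 ≤ lam) (σ z : ℝ) :
    lam * |soft lam σ| + (soft lam σ - σ) ^ 2 / 2 + (z - soft lam σ) ^ 2 / 2
      ≤ lam * |z| + (z - σ) ^ 2 / 2 := by
  have hz : -|z| ≤ z ∧ z ≤ |z| := abs_le.1 le_rfl
  unfold soft
  split_ifs with h₁ h₂
  · rw [abs_of_pos (by linarith)]; nlinarith
  · rw [abs_of_neg (by linarith)]; nlinarith
  · rw [abs_zero]; nlinarith [abs_nonneg z]

section

variable {m n p q : ℕ}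

lemma frobSq_nonneg (A : Matrix (Fin m) (Fin n) ℝ) : 0 ≤ frobSq A := by
  unfold frobSq; positivity

lemma frobSq_eq_zero_iff {A : Matrix (Fin m) (Fin n) ℝ} : frobSq A = 0 ↔ A = 0 := by
  rw [frobSq, Fintype.sum_eq_zero_iff_of_nonneg (fun i => by positivity)]
  simp [funext_iff, Fintype.sum_eq_zero_iff_of_nonneg (fun _ => sq_nonneg _), ← Matrix.ext_iff]

lemma frobSq_eq_trace (A : Matrix (Fin m) (Fin n) ℝ) : frobSq A = (Aᵀ * A).trace := by
  simp only [frobSq, trace, diag, mul_apply, transpose_apply, sq]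
  exact Finset.sum_comm

lemma transpose_mul_self_mul_mul {U : Matrix (Fin p) (Fin m) ℝ} (hU : Uᵀ * U = 1)
    (A : Matrix (Fin m) (Fin n) ℝ) (V : Matrix (Fin q) (Fin n) ℝ) :
    (U * A * Vᵀ)ᵀ * (U * A * Vᵀ) = V * (Aᵀ * A) * Vᵀ := by
  simp only [transpose_mul, transpose_transpose, Matrix.mul_assoc]
  rw [← Matrix.mul_assoc Uᵀ, hU, Matrix.one_mul]

lemma frobSq_mul_mul {U : Matrix (Fin p) (Fin m) ℝ} {V : Matrix (Fin q) (Fin n) ℝ}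
    (hU : Uᵀ * U = 1) (hV : Vᵀ * V = 1) (A : Matrix (Fin m) (Fin n) ℝ) :
    frobSq (U * A * Vᵀ) = frobSq A := by
  rw [frobSq_eq_trace, frobSq_eq_trace, transpose_mul_self_mul_mul hU, trace_mul_comm,
    ← Matrix.mul_assoc, hV, Matrix.one_mul]

lemma nuclearNorm_eq_of_charpoly_eq {A : Matrix (Fin m) (Fin n) ℝ} {B : Matrix (Fin p) (Fin n) ℝ}
    (h : (Aᴴ * A).charpoly = (Bᴴ * B).charpoly) : nuclearNorm A = nuclearNorm B := by
  unfold nuclearNorm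
  rw [(IsHermitian.eigenvalues_eq_eigenvalues_iff _ _).2 h]

lemma nuclearNorm_mul_mul {U : Matrix (Fin p) (Fin m) ℝ} {V : Matrix (Fin n) (Fin n) ℝ}
    (hU : Uᵀ * U = 1) (hV : Vᵀ * V = 1) (A : Matrix (Fin m) (Fin n) ℝ) :
    nuclearNorm (U * A * Vᵀ) = nuclearNorm A := by
  apply nuclearNorm_eq_of_charpoly_eq
  simp only [conjTranspose_eq_transpose_of_trivial]
  rw [transpose_mul_self_mul_mul hU, Matrix.mul_assoc, charpoly_mul_comm, Matrix.mul_assoc, hV,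
    Matrix.mul_one]

open Polynomial in
lemma Matrix.IsHermitian.sum_comp_eigenvalues_of_charpoly_eq {ι : Type*} [Fintype ι]
    [DecidableEq ι] {A : Matrix ι ι ℝ} (hA : A.IsHermitian) {d : ι → ℝ}
    (h : A.charpoly = ∏ i, (X - C (d i))) (f : ℝ → ℝ) :
    ∑ i, f (hA.eigenvalues i) = ∑ i, f (d i) := by
  have hprod : A.charpoly = ((Finset.univ.val.map d).map fun a => X - C a).prod := by
    rw [h, Multiset.map_map]; rfl
  have hroots : Finset.univ.val.map hA.eigenvalues = Finset.univ.val.map d := by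
    have := hA.roots_charpoly_eq_eigenvalues
    rw [hprod, roots_multiset_prod_X_sub_C] at this
    simpa using this.symm
  calc ∑ i, f (hA.eigenvalues i) = ((Finset.univ.val.map hA.eigenvalues).map f).sum := by
        rw [Multiset.map_map]; rfl
    _ = ∑ i, f (d i) := by rw [hroots, Multiset.map_map]; rfl

lemma nuclearNorm_of_isDiag {A : Matrix (Fin m) (Fin n) ℝ} (h : (Aᴴ * A).IsDiag) :
    nuclearNorm A = ∑ j, √((Aᴴ * A) j j) := by
  unfold nuclearNorm
  apply IsHermitian.sum_comp_eigenvalues_of_charpoly_eq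
  rw [← charpoly_diagonal]
  exact congrArg charpoly h.diagonal_diag.symm

lemma Real.sqrt_sum_sq_of_support_subsingleton {ι : Type*} [Fintype ι] {f : ι → ℝ}
    (hf : (Function.support f).Subsingleton) : √(∑ i, f i ^ 2) = ∑ i, |f i| := by
  rcases hf.eq_empty_or_singleton with h | ⟨i, h⟩
  · simp [Function.support_eq_empty_iff.1 h]
  · have hzero : ∀ j ≠ i, f j = 0 := fun j hj => Function.notMem_support.1 (h ▸ hj)
    rw [Finset.sum_eq_single i (fun j _ hj => by simp [hzero j hj]) (by simp),
      Finset.sum_eq_single i (fun j _ hj => by simp [hzero j hj]) (by simp),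
      Real.sqrt_sq_eq_abs]

namespace Matrix

def IsRectDiag {α : Type*} [Zero α] (A : Matrix (Fin m) (Fin n) α) : Prop :=
  ∀ (i : Fin m) (j : Fin n), (i : ℕ) ≠ (j : ℕ) → A i j = 0

variable {α : Type*}

lemma IsRectDiag.map {β : Type*} [Zero α] [Zero β] {A : Matrix (Fin m) (Fin n) α}
    (hA : A.IsRectDiag) {f : α → β} (hf : f 0 = 0) : (A.map f).IsRectDiag := fun i j h => by
  simp [hA i j h, hf]

lemma IsRectDiag.support_col_subsingleton [Zero α] {A : Matrix (Fin m) (Fin n) α}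
    (hA : A.IsRectDiag) (j : Fin n) : (Function.support fun i => A i j).Subsingleton :=
  fun i hi i' hi' =>
    Fin.ext <| (not_not.1 (mt (hA i j) hi)).trans (not_not.1 (mt (hA i' j) hi')).symm

lemma IsRectDiag.transpose_mul_self_isDiag [NonUnitalNonAssocSemiring α]
    {A : Matrix (Fin m) (Fin n) α} (hA : A.IsRectDiag) : (Aᵀ * A).IsDiag := by
  intro j k hjk
  rw [mul_apply]
  refine Finset.sum_eq_zero fun i _ => ?_
  by_cases h : (i : ℕ) = j
  · rw [transpose_apply, hA i k (h ▸ Fin.val_injective.ne hjk), mul_zero]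
  · rw [transpose_apply, hA i j h, zero_mul]

lemma IsRectDiag.nuclearNorm_eq {A : Matrix (Fin m) (Fin n) ℝ} (hA : A.IsRectDiag) :
    nuclearNorm A = ∑ i, ∑ j, |A i j| := by
  have hdiag : (Aᴴ * A).IsDiag := by
    rw [conjTranspose_eq_transpose_of_trivial]; exact hA.transpose_mul_self_isDiag
  rw [nuclearNorm_of_isDiag hdiag, Finset.sum_comm]
  refine Finset.sum_congr rfl fun j _ => ?_
  simp only [mul_apply, conjTranspose_apply, star_trivial, ← sq]
  exact Real.sqrt_sum_sq_of_support_subsingleton (hA.support_col_subsingleton j)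

end Matrix

def diagPairs (m n : ℕ) : Finset (Fin m × Fin n) :=
  Finset.univ.filter fun p => (p.1 : ℕ) = p.2

lemma sum_diagPairs_mul_le (x : Fin m → ℝ) (y : Fin n → ℝ) :
    ∑ p ∈ diagPairs m n, x p.1 * y p.2 ≤ √(∑ i, x i ^ 2) * √(∑ j, y j ^ 2) := by
  have hfst : Set.InjOn Prod.fst (diagPairs m n : Set (Fin m × Fin n)) := by
    intro p hp q hq h
    simp only [diagPairs, Finset.coe_filter, Finset.mem_univ, true_and, Set.mem_ofPred_eq] at hp hq
    exact Prod.ext h (Fin.ext (by rw [← hp, ← hq, h]))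
  have hsnd : Set.InjOn Prod.snd (diagPairs m n : Set (Fin m × Fin n)) := by
    intro p hp q hq h
    simp only [diagPairs, Finset.coe_filter, Finset.mem_univ, true_and, Set.mem_ofPred_eq] at hp hq
    exact Prod.ext (Fin.ext (by rw [hp, hq, h])) h
  have hx : ∑ p ∈ diagPairs m n, x p.1 ^ 2 ≤ ∑ i, x i ^ 2 := by
    rw [← Finset.sum_image (f := fun i => x i ^ 2) hfst]
    exact Finset.sum_le_univ_sum_of_nonneg fun _ => sq_nonneg _
  have hy : ∑ p ∈ diagPairs m n, y p.2 ^ 2 ≤ ∑ j, y j ^ 2 := by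
    rw [← Finset.sum_image (f := fun j => y j ^ 2) hsnd]
    exact Finset.sum_le_univ_sum_of_nonneg fun _ => sq_nonneg _
  exact (Real.sum_mul_le_sqrt_mul_sqrt _ _ _).trans
    (mul_le_mul (Real.sqrt_le_sqrt hx) (Real.sqrt_le_sqrt hy) (Real.sqrt_nonneg _)
      (Real.sqrt_nonneg _))

lemma sum_sq_mul_eigenvectorUnitary_col (Z : Matrix (Fin m) (Fin n) ℝ) (k : Fin n) :
    ∑ i, (Z * ((isHermitian_conjTranspose_mul_self Z).eigenvectorUnitary :
      Matrix (Fin n) (Fin n) ℝ)) i k ^ 2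
      = (isHermitian_conjTranspose_mul_self Z).eigenvalues k := by
  have hdiag := congrFun (congrFun
    (isHermitian_conjTranspose_mul_self Z).conjStarAlgAut_star_eigenvectorUnitary k) k
  rw [Unitary.conjStarAlgAut_star_apply, star_eq_conjTranspose, Matrix.mul_assoc,
    Matrix.mul_assoc, ← Matrix.mul_assoc _ Zᴴ, ← conjTranspose_mul, mul_apply] at hdiag
  simpa [sq] using hdiag

lemma sum_diagPairs_abs_le_nuclearNorm (Z : Matrix (Fin m) (Fin n) ℝ) :
    ∑ p ∈ diagPairs m n, |Z p.1 p.2| ≤ nuclearNorm Z := by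
  set hH := isHermitian_conjTranspose_mul_self Z
  set Q := hH.eigenvectorUnitary
  set W : Matrix (Fin m) (Fin n) ℝ := Z * (Q : Matrix (Fin n) (Fin n) ℝ)
  have hZ : ∀ i j, Z i j = ∑ k, W i k * Q j k := by
    intro i j
    conv_lhs => rw [← Matrix.mul_one Z, ← Unitary.coe_mul_star_self Q, ← Matrix.mul_assoc]
    simp [mul_apply, star_apply, W]
  have hW : ∀ k, ∑ i, W i k ^ 2 = hH.eigenvalues k := sum_sq_mul_eigenvectorUnitary_col Z
  have hQ : ∀ k, ∑ j, (Q : Matrix (Fin n) (Fin n) ℝ) j k ^ 2 = 1 := by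
    intro k
    have := congrFun (congrFun (Unitary.coe_star_mul_self Q) k) k
    simpa [mul_apply, sq] using this
  calc ∑ p ∈ diagPairs m n, |Z p.1 p.2|
      ≤ ∑ p ∈ diagPairs m n, ∑ k, |W p.1 k| * |Q p.2 k| := by
        refine Finset.sum_le_sum fun p _ => ?_
        rw [hZ]
        exact (Finset.abs_sum_le_sum_abs _ _).trans_eq (by simp only [abs_mul])
    _ = ∑ k, ∑ p ∈ diagPairs m n, |W p.1 k| * |Q p.2 k| := Finset.sum_comm
    _ ≤ ∑ k, √(∑ i, |W i k| ^ 2) * √(∑ j, |Q j k| ^ 2) :=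
        Finset.sum_le_sum fun k _ => sum_diagPairs_mul_le (|W · k|) (|Q · k|)
    _ = nuclearNorm Z := by
        simp only [sq_abs, hQ, hW, Real.sqrt_one, mul_one]
        rfl

noncomputable def svtObjective (lam : ℝ) (Y X : Matrix (Fin m) (Fin n) ℝ) : ℝ :=
  lam * nuclearNorm X + (1 / 2) * frobSq (X - Y)

lemma svtObjective_add_le_of_isRectDiag {lam : ℝ} (hlam : 0 ≤ lam)
    {S : Matrix (Fin m) (Fin n) ℝ} (hS : S.IsRectDiag) (Z : Matrix (Fin m) (Fin n) ℝ) :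
    svtObjective lam S (S.map (soft lam)) + (1 / 2) * frobSq (Z - S.map (soft lam))
      ≤ svtObjective lam S Z := by
  set M := S.map (soft lam)
  have hM : M.IsRectDiag := hS.map (soft_zero hlam)
  have hpinch :
      ∑ i : Fin m, ∑ j : Fin n, (if (i : ℕ) = j then |Z i j| else 0) ≤ nuclearNorm Z := by
    simpa [diagPairs, Finset.sum_filter, Fintype.sum_prod_type] using
      sum_diagPairs_abs_le_nuclearNorm Z
  have hentry : ∀ (i : Fin m) (j : Fin n),
      lam * |M i j| + (M i j - S i j) ^ 2 / 2 + (Z i j - M i j) ^ 2 / 2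
        ≤ lam * (if (i : ℕ) = j then |Z i j| else 0) + (Z i j - S i j) ^ 2 / 2 := by
    intro i j
    by_cases h : (i : ℕ) = j
    · rw [if_pos h]; exact soft_optimality hlam (S i j) (Z i j)
    · rw [if_neg h, hM i j h, hS i j h]; simp
  have hsum := Finset.sum_le_sum fun i (_ : i ∈ Finset.univ) =>
    Finset.sum_le_sum fun j (_ : j ∈ Finset.univ) => hentry i j
  simp only [Finset.sum_add_distrib, ← Finset.mul_sum, ← Finset.sum_div] at hsum
  simp only [svtObjective, hM.nuclearNorm_eq, frobSq, Matrix.sub_apply]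
  linarith [mul_le_mul_of_nonneg_left hpinch hlam]

lemma svtObjective_mul_mul {U : Matrix (Fin p) (Fin m) ℝ} {V : Matrix (Fin n) (Fin n) ℝ}
    (hU : Uᵀ * U = 1) (hV : Vᵀ * V = 1) (lam : ℝ) (Y X : Matrix (Fin m) (Fin n) ℝ) :
    svtObjective lam (U * Y * Vᵀ) (U * X * Vᵀ) = svtObjective lam Y X := by
  rw [svtObjective, svtObjective, ← Matrix.sub_mul, ← Matrix.mul_sub, nuclearNorm_mul_mul hU hV,
    frobSq_mul_mul hU hV]

lemma svtObjective_add_le {lam : ℝ} (hlam : 0 ≤ lam) {U : Matrix (Fin m) (Fin m) ℝ}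
    {V : Matrix (Fin n) (Fin n) ℝ} (hU : Uᵀ * U = 1) (hV : Vᵀ * V = 1)
    {S : Matrix (Fin m) (Fin n) ℝ} (hS : S.IsRectDiag) (X : Matrix (Fin m) (Fin n) ℝ) :
    svtObjective lam (U * S * Vᵀ) (U * S.map (soft lam) * Vᵀ)
        + (1 / 2) * frobSq (X - U * S.map (soft lam) * Vᵀ)
      ≤ svtObjective lam (U * S * Vᵀ) X := by
  obtain ⟨Z, rfl⟩ : ∃ Z, X = U * Z * Vᵀ :=
    ⟨Uᵀ * X * V, by
      simp only [← Matrix.mul_assoc, mul_eq_one_comm.1 hU, Matrix.one_mul]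
      rw [Matrix.mul_assoc, mul_eq_one_comm.1 hV, Matrix.mul_one]⟩
  rw [svtObjective_mul_mul hU hV, svtObjective_mul_mul hU hV, ← Matrix.sub_mul, ← Matrix.mul_sub,
    frobSq_mul_mul hU hV]
  exact svtObjective_add_le_of_isRectDiag hlam hS Z

end

theorem singular_value_thresholding_general {m n : ℕ} (lam : ℝ) (hlam : 0 < lam)
    (Y : Matrix (Fin m) (Fin n) ℝ)
    (U : Matrix (Fin m) (Fin m) ℝ) (V : Matrix (Fin n) (Fin n) ℝ)
    (Sg : Matrix (Fin m) (Fin n) ℝ)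
    (hU : Uᵀ * U = 1) (hV : Vᵀ * V = 1)
    (hSgDiag : ∀ (i : Fin m) (j : Fin n), (i : ℕ) ≠ (j : ℕ) → Sg i j = 0)
    (hY : Y = U * Sg * Vᵀ) :
    (∀ X : Matrix (Fin m) (Fin n) ℝ,
      lam * nuclearNorm (U * Sg.map (soft lam) * Vᵀ)
          + (1/2) * frobSq (U * Sg.map (soft lam) * Vᵀ - Y)
        ≤ lam * nuclearNorm X + (1/2) * frobSq (X - Y)) ∧
    (∀ X : Matrix (Fin m) (Fin n) ℝ,
      lam * nuclearNorm X + (1/2) * frobSq (X - Y)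
          ≤ lam * nuclearNorm (U * Sg.map (soft lam) * Vᵀ)
            + (1/2) * frobSq (U * Sg.map (soft lam) * Vᵀ - Y)
        → X = U * Sg.map (soft lam) * Vᵀ) := by
  subst hY
  have key := svtObjective_add_le hlam.le hU hV (S := Sg) hSgDiag
  unfold svtObjective at key
  refine ⟨fun X => ?_, fun X hX => ?_⟩
  · linarith [key X, frobSq_nonneg (X - U * Sg.map (soft lam) * Vᵀ)]
  · have hdist : frobSq (X - U * Sg.map (soft lam) * Vᵀ) = 0 :=
      le_antisymm (by linarith [key X]) (frobSq_nonneg _)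
    exact sub_eq_zero.1 (frobSq_eq_zero_iff.1 hdist)

/-- Singular value thresholding (Cai–Candès–Shen): for `λ > 0` and any
singular value decomposition `Y = U Σ Vᵀ` (with `U`, `V` orthogonal and `Σ`
rectangular-diagonal with nonnegative entries), the matrix
`D_λ(Y) = U S_λ(Σ) Vᵀ`, obtained by soft thresholding the diagonal entries of
`Σ`, is the unique minimizer of `X ↦ λ‖X‖_* + (1/2)‖X - Y‖_F²`. -/
theorem singular_value_thresholding {m n : ℕ} (lam : ℝ) (hlam : 0 < lam)
    (Y : Matrix (Fin m) (Fin n) ℝ)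
    (U : Matrix (Fin m) (Fin m) ℝ) (V : Matrix (Fin n) (Fin n) ℝ)
    (Sg : Matrix (Fin m) (Fin n) ℝ)
    (hU : Uᵀ * U = 1) (hV : Vᵀ * V = 1)
    (hSgDiag : ∀ (i : Fin m) (j : Fin n), (i : ℕ) ≠ (j : ℕ) → Sg i j = 0)
    (hSgNonneg : ∀ i j, 0 ≤ Sg i j)
    (hY : Y = U * Sg * Vᵀ) :
    (∀ X : Matrix (Fin m) (Fin n) ℝ,
      lam * nuclearNorm (U * Sg.map (soft lam) * Vᵀ)
          + (1/2) * frobSq (U * Sg.map (soft lam) * Vᵀ - Y)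
        ≤ lam * nuclearNorm X + (1/2) * frobSq (X - Y)) ∧
    (∀ X : Matrix (Fin m) (Fin n) ℝ,
      lam * nuclearNorm X + (1/2) * frobSq (X - Y)
          ≤ lam * nuclearNorm (U * Sg.map (soft lam) * Vᵀ)
            + (1/2) * frobSq (U * Sg.map (soft lam) * Vᵀ - Y)
        → X = U * Sg.map (soft lam) * Vᵀ) :=
  singular_value_thresholding_general lam hlam Y U V Sg hU hV hSgDiag hY
end

section
/- Let d₁ ∈ 𝔽^{n₁} and d₂ ∈ 𝔽^{n₂} be vectors, let k₁, k₂ ≥ 1, set m_i = k_i n_i, and define L_i = I_{k_i} ⊗ diag(d_i) for i = 1, 2. Then the column-wise reshaping of the diagonal vector of L₂ ⊗ L₁ into an m₁ × m₂ matrix equals J_{k₁,k₂} ⊗ (d₁ d₂ᵀ), where J_{k₁,k₂} is the k₁ × k₂ all-ones matrix. That is, im_{m₁,m₂}(diag(L₂ ⊗ L₁)) is the block matrix with every block equal to the outer product d₁ d₂ᵀ. -/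
open Matrix Kronecker

/-- `im m n x` is the column-wise reshaping of a vector `x` of length `n*m`
into an `m × n` matrix: the `(i,j)` entry is entry number `(j-1)m + i` of `x`
(one-based), i.e. `x (i + m*j)` zero-based. -/
def im (m n : ℕ) {F : Type*} (x : Fin (n * m) → F) : Matrix (Fin m) (Fin n) F :=
  fun i j => x (finProdFinEquiv (j, i))

/-!
The diagonal of `L₂ ⊗ L₁` at the linear index of `(q, p)` is
`diag L₂ q * diag L₁ p`, so its column-wise reshaping is the outer product `diag L₁ (diag L₂)ᵀ`.
Since `I_k ⊗ diag(d)` has diagonal `(a, b) ↦ d b`, independent of the block index `a`, that outer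
product has every `n₁ × n₂` block equal to `d₁ d₂ᵀ`, i.e. it is `J ⊗ d₁ d₂ᵀ`.
-/

namespace Matrix

variable {k l m n R : Type*}

theorem diag_reindex_self (e : m ≃ n) (M : Matrix m m R) :
    (reindex e e M).diag = M.diag ∘ e.symm :=
  diag_submatrix M e.symm

theorem diag_kronecker [Mul R] (A : Matrix m m R) (B : Matrix n n R) :
    (A ⊗ₖ B).diag = fun ij => A.diag ij.1 * B.diag ij.2 :=
  rfl

theorem diag_one_kronecker_diagonal [MulZeroOneClass R] [DecidableEq m] [DecidableEq n]
    (d : n → R) : ((1 : Matrix m m R) ⊗ₖ diagonal d).diag = d ∘ Prod.snd := by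
  ext ij
  simp

theorem reindex_vecMulVec [Mul R] (e : m ≃ k) (f : n ≃ l) (u : m → R) (v : n → R) :
    reindex e f (vecMulVec u v) = vecMulVec (u ∘ e.symm) (v ∘ f.symm) :=
  rfl

theorem vecMulVec_comp_snd [MulOneClass R] (u : m → R) (v : n → R) :
    vecMulVec (u ∘ Prod.snd) (v ∘ Prod.snd) =
      (of fun _ _ => (1 : R) : Matrix k l R) ⊗ₖ vecMulVec u v := by
  ext ij ij'
  simp [vecMulVec_apply]

end Matrix

theorem im_diag_reindex_kronecker {R : Type*} [CommMagma R] {m n : ℕ}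
    (A : Matrix (Fin n) (Fin n) R) (B : Matrix (Fin m) (Fin m) R) :
    im m n (reindex finProdFinEquiv finProdFinEquiv (A ⊗ₖ B)).diag = vecMulVec B.diag A.diag := by
  ext i j
  simp only [im, diag_reindex_self, Function.comp_apply, Equiv.symm_apply_apply, diag_kronecker,
    vecMulVec_apply]
  exact mul_comm _ _

theorem im_diag_kron_of_block_diagonal_general {F : Type*} [Field F]
    {n₁ n₂ k₁ k₂ : ℕ}
    (d₁ : Fin n₁ → F) (d₂ : Fin n₂ → F) :
    im (k₁ * n₁) (k₂ * n₂)
      (Matrix.diag (Matrix.reindex finProdFinEquiv finProdFinEquiv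
        ((Matrix.reindex finProdFinEquiv finProdFinEquiv
            ((1 : Matrix (Fin k₂) (Fin k₂) F) ⊗ₖ Matrix.diagonal d₂))
          ⊗ₖ (Matrix.reindex finProdFinEquiv finProdFinEquiv
            ((1 : Matrix (Fin k₁) (Fin k₁) F) ⊗ₖ Matrix.diagonal d₁)))))
      = Matrix.reindex finProdFinEquiv finProdFinEquiv
          ((Matrix.of fun _ _ => (1 : F) : Matrix (Fin k₁) (Fin k₂) F)
            ⊗ₖ Matrix.vecMulVec d₁ d₂) := by
  rw [im_diag_reindex_kronecker, diag_reindex_self, diag_reindex_self,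
    diag_one_kronecker_diagonal, diag_one_kronecker_diagonal, ← vecMulVec_comp_snd,
    reindex_vecMulVec]

/-- Let `d₁ ∈ 𝔽^{n₁}`, `d₂ ∈ 𝔽^{n₂}`, `k₁, k₂ ≥ 1`, `m_i = k_i n_i`, and
`L_i = I_{k_i} ⊗ diag(d_i)` (realized on linear indices `Fin (k_i * n_i)` via
`finProdFinEquiv`). Then the column-wise reshaping of the diagonal of
`L₂ ⊗ L₁` into an `m₁ × m₂` matrix is `J_{k₁,k₂} ⊗ (d₁ d₂ᵀ)`: the block matrix
all of whose `n₁ × n₂` blocks equal the outer product `d₁ d₂ᵀ`. -/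
theorem im_diag_kron_of_block_diagonal {F : Type*} [Field F]
    {n₁ n₂ k₁ k₂ : ℕ} (hk₁ : 1 ≤ k₁) (hk₂ : 1 ≤ k₂)
    (d₁ : Fin n₁ → F) (d₂ : Fin n₂ → F) :
    im (k₁ * n₁) (k₂ * n₂)
      (Matrix.diag (Matrix.reindex finProdFinEquiv finProdFinEquiv
        ((Matrix.reindex finProdFinEquiv finProdFinEquiv
            ((1 : Matrix (Fin k₂) (Fin k₂) F) ⊗ₖ Matrix.diagonal d₂))
          ⊗ₖ (Matrix.reindex finProdFinEquiv finProdFinEquiv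
            ((1 : Matrix (Fin k₁) (Fin k₁) F) ⊗ₖ Matrix.diagonal d₁)))))
      = Matrix.reindex finProdFinEquiv finProdFinEquiv
          ((Matrix.of fun _ _ => (1 : F) : Matrix (Fin k₁) (Fin k₂) F)
            ⊗ₖ Matrix.vecMulVec d₁ d₂) :=
  im_diag_kron_of_block_diagonal_general d₁ d₂
end
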